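/- The Takagi function T(x) = Σ_{n=0}^∞ 2^{-n} dist(2ⁿx, ℤ) is of monotonic type on no interval: for every open subinterval J of (0,1), sup_{x,y ∈ J, x>y} (T(x)-T(y))/(x-y) = +∞ and inf_{x,y ∈ J, x>y} (T(x)-T(y))/(x-y) = -∞. -/

import Mathlib

/-- The Takagi function `T(x) = Σ 2^{-n} dist(2ⁿ x, ℤ)`. -/
noncomputable def takagi (x : ℝ) : ℝ :=
  ∑' n : ℕ, (2:ℝ)⁻¹ ^ n * |2 ^ n * x - round (2 ^ n * x)|

/-!
Write `T = Σ tₙ` with `tₙ(x) = 2⁻ⁿ dist(2ⁿx, ℤ)`; each `tₙ` is `1`-Lipschitz. Let `a = j / 2^N` be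
dyadic and `δ = ±2⁻ᵐ` with `N ≤ m`. In `T(a + δ) - T(a)` the terms with `n ≥ m` vanish, those with
`N ≤ n < m` equal `2⁻ᵐ` (as `2ⁿa ∈ ℤ` and `|2ⁿδ| ≤ 1/2`), and the `N` remaining ones are at least
`-2⁻ᵐ`. So `T(a ± 2⁻ᵐ) - T(a) ≥ (m - 2N) 2⁻ᵐ`: at `a` the right difference quotients tend to `+∞`
and the left ones to `-∞`, and every interval contains such an `a` with `a ± 2⁻ᴺ`.
-/

open Finset

noncomputable def takagiTerm (n : ℕ) (x : ℝ) : ℝ :=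
  (2 : ℝ)⁻¹ ^ n * ‖((2 ^ n * x : ℝ) : UnitAddCircle)‖

theorem takagi_eq_tsum_takagiTerm (x : ℝ) : takagi x = ∑' n, takagiTerm n x := by
  simp only [takagi, takagiTerm, UnitAddCircle.norm_eq]

theorem abs_norm_coe_sub_norm_coe_le (x y : ℝ) :
    |‖(x : UnitAddCircle)‖ - ‖(y : UnitAddCircle)‖| ≤ |x - y| := by
  calc |‖(x : UnitAddCircle)‖ - ‖(y : UnitAddCircle)‖|
      ≤ ‖((x - y : ℝ) : UnitAddCircle)‖ := abs_norm_sub_norm_le _ _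
    _ = |(x - y) - round (x - y)| := UnitAddCircle.norm_eq
    _ ≤ |(x - y) - ((0 : ℤ) : ℝ)| := round_le _ 0
    _ = |x - y| := by simp

theorem abs_takagiTerm_sub_le (n : ℕ) (x y : ℝ) :
    |takagiTerm n x - takagiTerm n y| ≤ |x - y| := by
  have h := abs_norm_coe_sub_norm_coe_le (2 ^ n * x) (2 ^ n * y)
  rw [← mul_sub, abs_mul, abs_pow, abs_two] at h
  rw [takagiTerm, takagiTerm, ← mul_sub, abs_mul, abs_pow, abs_inv, abs_two, inv_pow,
    inv_mul_le_iff₀ (by positivity)]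
  exact h

theorem two_pow_mul_eq_intCast_of_le {N n : ℕ} {j : ℤ} {a : ℝ} (ha : (2 : ℝ) ^ N * a = j)
    (hn : N ≤ n) : (2 : ℝ) ^ n * a = ((j * 2 ^ (n - N) : ℤ) : ℝ) := by
  rw [← pow_sub_mul_pow (2 : ℝ) hn, mul_assoc, ha]
  push_cast
  ring

theorem takagiTerm_add_of_two_pow_mul_eq_intCast {N n : ℕ} {j : ℤ} {a δ : ℝ}
    (ha : (2 : ℝ) ^ N * a = j) (hn : N ≤ n) (hδ : |2 ^ n * δ| ≤ 1 / 2) :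
    takagiTerm n (a + δ) = |δ| := by
  have hshift : ((2 ^ n * (a + δ) : ℝ) : UnitAddCircle) = (2 ^ n * δ : ℝ) := by
    rw [mul_add, two_pow_mul_eq_intCast_of_le ha hn]
    generalize j * 2 ^ (n - N) = k
    simp
  have hnorm : ‖((2 ^ n * δ : ℝ) : UnitAddCircle)‖ = |2 ^ n * δ| :=
    (AddCircle.norm_coe_eq_abs_iff (p := 1) one_ne_zero).2 (by simpa using hδ)
  rw [takagiTerm, hshift, hnorm, abs_mul, abs_of_pos (by positivity), inv_pow,
    inv_mul_cancel_left₀ (by positivity)]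

theorem takagiTerm_of_two_pow_mul_eq_intCast {N n : ℕ} {j : ℤ} {a : ℝ}
    (ha : (2 : ℝ) ^ N * a = j) (hn : N ≤ n) : takagiTerm n a = 0 := by
  simpa using takagiTerm_add_of_two_pow_mul_eq_intCast (δ := 0) ha hn (by simp)

theorem takagi_eq_sum_range {m : ℕ} {k : ℤ} {x : ℝ} (hx : (2 : ℝ) ^ m * x = k) :
    takagi x = ∑ n ∈ range m, takagiTerm n x := by
  rw [takagi_eq_tsum_takagiTerm]
  exact tsum_eq_sum fun n hn => takagiTerm_of_two_pow_mul_eq_intCast hx (by simpa using hn)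

theorem mul_abs_le_takagi_add_sub {N m : ℕ} {j : ℤ} {a δ : ℝ} (ha : (2 : ℝ) ^ N * a = j)
    (hNm : N ≤ m) (hδ : |δ| = ((2 : ℝ) ^ m)⁻¹) :
    ((m : ℝ) - 2 * N) * |δ| ≤ takagi (a + δ) - takagi a := by
  have hδm : (2 : ℝ) ^ m * δ = 1 ∨ (2 : ℝ) ^ m * δ = -1 := by
    rw [← abs_eq zero_le_one, abs_mul, abs_of_pos (by positivity), hδ,
      mul_inv_cancel₀ (by positivity)]
  have ham := two_pow_mul_eq_intCast_of_le ha hNm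
  obtain ⟨k, hk⟩ : ∃ k : ℤ, (2 : ℝ) ^ m * (a + δ) = k := by
    rcases hδm with h | h
    · exact ⟨j * 2 ^ (m - N) + 1, by rw [mul_add, ham, h]; push_cast; ring⟩
    · exact ⟨j * 2 ^ (m - N) - 1, by rw [mul_add, ham, h]; push_cast; ring⟩
  have hlow : ∀ n ∈ range N, -|δ| ≤ takagiTerm n (a + δ) - takagiTerm n a := fun n _ =>
    (abs_le.1 (by simpa using abs_takagiTerm_sub_le n (a + δ) a)).1
  have hhigh : ∀ n ∈ Ico N m, takagiTerm n (a + δ) - takagiTerm n a = |δ| := fun n hn => by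
    obtain ⟨hNn, hnm⟩ := mem_Ico.1 hn
    have hsmall : |2 ^ n * δ| ≤ 1 / 2 := by
      rw [abs_mul, abs_of_pos (by positivity), hδ, ← div_eq_mul_inv,
        div_le_div_iff₀ (by positivity) two_pos, one_mul, ← pow_succ]
      exact pow_le_pow_right₀ one_le_two hnm
    rw [takagiTerm_add_of_two_pow_mul_eq_intCast ha hNn hsmall,
      takagiTerm_of_two_pow_mul_eq_intCast ha hNn, sub_zero]
  have hsum_low := card_nsmul_le_sum _ _ _ hlow
  rw [takagi_eq_sum_range hk, takagi_eq_sum_range ham, ← sum_sub_distrib,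
    ← sum_range_add_sum_Ico _ hNm, sum_congr rfl hhigh, sum_const, Nat.card_Ico, nsmul_eq_mul,
    Nat.cast_sub hNm]
  simp only [card_range, nsmul_eq_mul] at hsum_low
  linarith

theorem sub_two_mul_le_takagi_slope_right {N m : ℕ} {j : ℤ} {a : ℝ}
    (ha : (2 : ℝ) ^ N * a = j) (hNm : N ≤ m) :
    (m : ℝ) - 2 * N ≤
      (takagi (a + ((2 : ℝ) ^ m)⁻¹) - takagi a) / (a + ((2 : ℝ) ^ m)⁻¹ - a) := by
  have h := mul_abs_le_takagi_add_sub ha hNm (abs_of_pos (by positivity))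
  rw [abs_of_pos (by positivity)] at h
  rwa [add_sub_cancel_left, le_div_iff₀ (by positivity)]

theorem takagi_slope_left_le_two_mul_sub {N m : ℕ} {j : ℤ} {a : ℝ}
    (ha : (2 : ℝ) ^ N * a = j) (hNm : N ≤ m) :
    (takagi a - takagi (a - ((2 : ℝ) ^ m)⁻¹)) / (a - (a - ((2 : ℝ) ^ m)⁻¹)) ≤
      2 * N - m := by
  have h := mul_abs_le_takagi_add_sub ha hNm (δ := -((2 : ℝ) ^ m)⁻¹) (by simp)
  rw [abs_neg, abs_of_pos (by positivity), ← sub_eq_add_neg] at h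
  rw [sub_sub_cancel, div_le_iff₀ (by positivity)]
  linarith

theorem exists_dyadic_sub_add_mem_Ioo {u v : ℝ} (huv : u < v) :
    ∃ N : ℕ, ∃ j : ℤ, ∃ a : ℝ, (2 : ℝ) ^ N * a = j ∧
      u < a - ((2 : ℝ) ^ N)⁻¹ ∧ a + ((2 : ℝ) ^ N)⁻¹ < v := by
  obtain ⟨N, hN⟩ := pow_unbounded_of_one_lt (3 / (v - u)) one_lt_two
  have hpos : (0 : ℝ) < 2 ^ N := by positivity
  rw [div_lt_iff₀ (by linarith)] at hN
  set k := ⌊u * 2 ^ N⌋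
  refine ⟨N, k + 2, (k + 2) / 2 ^ N, by push_cast; field_simp, ?_, ?_⟩
  · rw [show ((k : ℝ) + 2) / 2 ^ N - (2 ^ N)⁻¹ = (k + 1) / 2 ^ N by field_simp; ring,
      lt_div_iff₀ hpos]
    linarith [Int.lt_floor_add_one (u * 2 ^ N)]
  · rw [show ((k : ℝ) + 2) / 2 ^ N + (2 ^ N)⁻¹ = (k + 3) / 2 ^ N by field_simp; ring,
      div_lt_iff₀ hpos]
    linarith [Int.floor_le (u * 2 ^ N)]

/-- The Takagi function is of monotonic type on no interval: on every open
subinterval of `(0,1)` the difference quotients are unbounded above and below. -/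
theorem takagi_MTNI :
    ∀ u v : ℝ, 0 ≤ u → u < v → v ≤ 1 →
      (∀ M : ℝ, ∃ x ∈ Set.Ioo u v, ∃ y ∈ Set.Ioo u v, y < x ∧
        M < (takagi x - takagi y) / (x - y)) ∧
      (∀ M : ℝ, ∃ x ∈ Set.Ioo u v, ∃ y ∈ Set.Ioo u v, y < x ∧
        (takagi x - takagi y) / (x - y) < M) := by
  intro u v _ huv _
  obtain ⟨N, j, a, ha, hu, hv⟩ := exists_dyadic_sub_add_mem_Ioo huv
  have hm : ∀ M : ℝ, ∃ m : ℕ, N ≤ m ∧ |M| < (m : ℝ) - 2 * N := fun M => by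
    obtain ⟨k, hk⟩ := exists_nat_gt |M|
    exact ⟨k + 2 * N, by omega, by push_cast; linarith⟩
  have hε : ∀ m : ℕ, N ≤ m → 0 < ((2 : ℝ) ^ m)⁻¹ ∧ ((2 : ℝ) ^ m)⁻¹ ≤ ((2 : ℝ) ^ N)⁻¹ :=
    fun m hNm => ⟨by positivity, inv_anti₀ (by positivity) (pow_le_pow_right₀ one_le_two hNm)⟩
  refine ⟨fun M => ?_, fun M => ?_⟩
  · obtain ⟨m, hNm, hM⟩ := hm M
    obtain ⟨hpos, hle⟩ := hε m hNm
    exact ⟨a + ((2 : ℝ) ^ m)⁻¹, ⟨by linarith, by linarith⟩, a, ⟨by linarith, by linarith⟩,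
      by linarith, by linarith [le_abs_self M, sub_two_mul_le_takagi_slope_right ha hNm]⟩
  · obtain ⟨m, hNm, hM⟩ := hm M
    obtain ⟨hpos, hle⟩ := hε m hNm
    exact ⟨a, ⟨by linarith, by linarith⟩, a - ((2 : ℝ) ^ m)⁻¹, ⟨by linarith, by linarith⟩,
      by linarith, by linarith [neg_abs_le M, takagi_slope_left_le_two_mul_sub ha hNm]⟩
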